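/- arXiv:math/0209169 — 4 statements merged into one kernel-verified Lean document; each statement's English description precedes it below -/
import Mathlib

section
/- There do not exist subspaces P ⊆ W of V with dim P = 2 and dim W = 5 such that every 3-dimensional subspace U with P ⊆ U ⊆ W is Lagrangian. -/
/-!
If every `3`-dimensional `U` with `P ≤ U ≤ W` is isotropic, then each `w ∈ W` lies in such a `U`
together with `P`, so `W` is orthogonal to `P`. For a nondegenerate form `P` and its orthogonal
have complementary dimensions, so `5 = dim W ≤ dim P^⊥ = 6 - 2 = 4`, a contradiction.
-/

open Module

/-- A subspace `U` is *isotropic* for the bilinear form `α` if `α` vanishes identically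
on `U × U`. -/
def IsIsotropic {V : Type*} [AddCommGroup V] [Module ℂ V]
    (α : V →ₗ[ℂ] V →ₗ[ℂ] ℂ) (U : Submodule ℂ V) : Prop :=
  ∀ u ∈ U, ∀ v ∈ U, α u v = 0

/-- A subspace `U` is *Lagrangian* if it is isotropic of dimension `3`. -/
def IsLagrangian {V : Type*} [AddCommGroup V] [Module ℂ V]
    (α : V →ₗ[ℂ] V →ₗ[ℂ] ℂ) (U : Submodule ℂ V) : Prop :=
  IsIsotropic α U ∧ Module.finrank ℂ U = 3

section

variable {K V : Type*} [Field K] [AddCommGroup V] [Module K V] [FiniteDimensional K V]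

namespace Submodule

theorem finrank_sup_span_singleton_le (p : Submodule K V) (v : V) :
    finrank K (p ⊔ K ∙ v : Submodule K V) ≤ finrank K p + 1 := by
  by_cases hv : v ∈ p
  · rw [sup_eq_left.2 ((span_singleton_le_iff_mem v p).2 hv)]
    omega
  · rw [finrank_sup_span_singleton hv]

theorem exists_le_le_finrank_eq {A B : Submodule K V} (hAB : A ≤ B) {n : ℕ}
    (hAn : finrank K A ≤ n) (hnB : n ≤ finrank K B) :
    ∃ U : Submodule K V, A ≤ U ∧ U ≤ B ∧ finrank K U = n := by
  induction n, hAn using Nat.le_induction with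
  | base => exact ⟨A, le_rfl, hAB, rfl⟩
  | succ n _ ih =>
    obtain ⟨U, hAU, hUB, hU⟩ := ih (by omega)
    obtain ⟨x, hxB, hxU⟩ := SetLike.exists_of_lt (lt_of_le_of_ne hUB (by rintro rfl; omega))
    exact ⟨U ⊔ K ∙ x, le_sup_of_le_left hAU, sup_le hUB ((span_singleton_le_iff_mem x B).2 hxB),
      by rw [finrank_sup_span_singleton hxU, hU]⟩

end Submodule

theorem LinearMap.BilinForm.finrank_add_finrank_orthogonal_of_separatingLeft
    {B : LinearMap.BilinForm K V} (hB : B.SeparatingLeft) (W : Submodule K V) :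
    finrank K W + finrank K (B.orthogonal W) = finrank K V := by
  rw [finrank_add_finrank_orthogonal', LinearMap.separatingLeft_iff_ker_eq_bot.mp hB, inf_bot_eq,
    finrank_bot, add_zero]

end

theorem le_orthogonal_of_forall_isIsotropic {V : Type*} [AddCommGroup V] [Module ℂ V]
    [FiniteDimensional ℂ V] (α : V →ₗ[ℂ] V →ₗ[ℂ] ℂ) {P W : Submodule ℂ V} (hPW : P ≤ W) {k : ℕ}
    (hPk : finrank ℂ P < k) (hkW : k ≤ finrank ℂ W)
    (hiso : ∀ U : Submodule ℂ V, P ≤ U → U ≤ W → finrank ℂ U = k → IsIsotropic α U) :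
    W ≤ LinearMap.BilinForm.orthogonal α P := by
  intro w hw p hp
  have hPw : P ⊔ ℂ ∙ w ≤ W := sup_le hPW ((Submodule.span_singleton_le_iff_mem w W).2 hw)
  obtain ⟨U, hPwU, hUW, hUk⟩ := Submodule.exists_le_le_finrank_eq hPw
    ((P.finrank_sup_span_singleton_le w).trans hPk) hkW
  exact hiso U (le_sup_left.trans hPwU) hUW hUk p (hPwU (Submodule.mem_sup_left hp)) w
    (hPwU (Submodule.mem_sup_right (Submodule.mem_span_singleton_self w)))

theorem no_net_of_lagrangian_subspaces_general
    (V : Type*) [AddCommGroup V] [Module ℂ V] [FiniteDimensional ℂ V]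
    (hV : Module.finrank ℂ V = 6)
    (α : V →ₗ[ℂ] V →ₗ[ℂ] ℂ)
    (hnd : ∀ v : V, (∀ w : V, α v w = 0) → v = 0) :
    ¬ ∃ P W : Submodule ℂ V, P ≤ W ∧ Module.finrank ℂ P = 2 ∧ Module.finrank ℂ W = 5 ∧
        ∀ U : Submodule ℂ V, P ≤ U → U ≤ W → Module.finrank ℂ U = 3 → IsLagrangian α U := by
  rintro ⟨P, W, hPW, hP, hW, hlag⟩
  have hWP : W ≤ LinearMap.BilinForm.orthogonal α P :=
    le_orthogonal_of_forall_isIsotropic α hPW (k := 3) (by omega) (by omega)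
      fun U hPU hUW hU => (hlag U hPU hUW hU).1
  have hdim := LinearMap.BilinForm.finrank_add_finrank_orthogonal_of_separatingLeft hnd P
  have := Submodule.finrank_mono hWP
  omega

/-- There are no subspaces `P ⊆ W ⊆ V` with `dim P = 2` and `dim W = 5` such that every
`3`-dimensional subspace `U` with `P ⊆ U ⊆ W` is Lagrangian. -/
theorem no_net_of_lagrangian_subspaces
    (V : Type*) [AddCommGroup V] [Module ℂ V] [FiniteDimensional ℂ V]
    (hV : Module.finrank ℂ V = 6)
    (α : V →ₗ[ℂ] V →ₗ[ℂ] ℂ)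
    (halt : ∀ v : V, α v v = 0)
    (hnd : ∀ v : V, (∀ w : V, α v w = 0) → v = 0) :
    ¬ ∃ P W : Submodule ℂ V, P ≤ W ∧ Module.finrank ℂ P = 2 ∧ Module.finrank ℂ W = 5 ∧
        ∀ U : Submodule ℂ V, P ≤ U → U ≤ W → Module.finrank ℂ U = 3 → IsLagrangian α U :=
  no_net_of_lagrangian_subspaces_general V hV α hnd
end

section
/- Let U ⊆ V be a 3-dimensional subspace that is not Lagrangian (i.e. α does not vanish identically on U × U). Then U^⊥ is also 3-dimensional and not Lagrangian, U ∩ U^⊥ equals the radical {v ∈ U : α(v,u) = 0 for all u ∈ U} of α restricted to U, which is 1-dimensional, and for every Lagrangian subspace L of V one has L ∩ U ≠ 0 if and only if L ∩ U^⊥ ≠ 0. -/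
open Module

/-- The symplectic orthogonal `W^⊥ = {v ∈ V : α(v,w) = 0 for all w ∈ W}` of a subspace `W`. -/
def symplOrth {V : Type*} [AddCommGroup V] [Module ℂ V]
    (α : V →ₗ[ℂ] V →ₗ[ℂ] ℂ) (W : Submodule ℂ V) : Submodule ℂ V where
  carrier := {v | ∀ w ∈ W, α v w = 0}
  add_mem' := by
    intro a b ha hb w hw
    simp [ha w hw, hb w hw]
  zero_mem' := by
    intro w hw
    simp
  smul_mem' := by
    intro c a ha w hw
    simp [ha w hw]

/-!
For a nondegenerate form, `dim W^⊥ = dim V - dim W` and `W^⊥⊥ = W`, so a subspace of half the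
dimension is isotropic exactly when it equals its orthogonal; this passes non-isotropy from `U`
to `U^⊥`. The radical `U ∩ U^⊥` is nonzero because an alternating form on the odd-dimensional
space `U` is degenerate, and has codimension at least two in `U`: if `α(u,v) ≠ 0` it lies
strictly inside `U ∩ ker α(u,·)`, which contains `u` but not `v`. Finally, if `L ∩ U = 0` with
`dim L + dim U = dim V`, then `L^⊥ ∩ U^⊥ = (L + U)^⊥ = 0`; for a Lagrangian `L = L^⊥`, and the
converse is the same argument applied to `L^⊥` and `U^⊥`.
-/

-- The Gram matrix `M` of an alternating form is skew, so `det M = (-1) ^ n * det M`.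
theorem LinearMap.IsAlt.not_nondegenerate_of_odd_finrank {K V : Type*} [Field K]
    [AddCommGroup V] [Module K V] [FiniteDimensional K V] (h2 : (2 : K) ≠ 0)
    {B : LinearMap.BilinForm K V} (hB : B.IsAlt) (hodd : Odd (finrank K V)) :
    ¬ B.Nondegenerate := by
  set M := LinearMap.BilinForm.toMatrix (finBasis K V) B
  have hskew : M.transpose = -M := by
    ext i j
    simp only [M, Matrix.transpose_apply, Matrix.neg_apply, LinearMap.BilinForm.toMatrix_apply]
    exact (LinearMap.IsAlt.neg hB _ _).symm
  have hdet : M.det = -M.det := by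
    calc M.det = M.transpose.det := M.det_transpose.symm
      _ = -M.det := by
        rw [hskew, Matrix.det_neg, Fintype.card_fin, hodd.neg_one_pow, neg_one_mul]
  rw [LinearMap.BilinForm.nondegenerate_iff_det_ne_zero (finBasis K V), not_not]
  have : (2 : K) * M.det = 0 := by linear_combination hdet
  exact (mul_eq_zero.mp this).resolve_left h2

section

variable {V : Type*} [AddCommGroup V] [Module ℂ V] {α : V →ₗ[ℂ] V →ₗ[ℂ] ℂ}

theorem mem_symplOrth {W : Submodule ℂ V} {v : V} :
    v ∈ symplOrth α W ↔ ∀ w ∈ W, α v w = 0 := Iff.rfl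

theorem symplOrth_sup (A B : Submodule ℂ V) :
    symplOrth α (A ⊔ B) = symplOrth α A ⊓ symplOrth α B := by
  ext v
  simp only [Submodule.mem_inf, mem_symplOrth]
  refine ⟨fun h => ⟨fun w hw => h w (Submodule.mem_sup_left hw),
    fun w hw => h w (Submodule.mem_sup_right hw)⟩, ?_⟩
  rintro ⟨hA, hB⟩ w hw
  obtain ⟨a, ha, b, hb, rfl⟩ := Submodule.mem_sup.mp hw
  rw [map_add, hA a ha, hB b hb, add_zero]

theorem symplOrth_top (hα : α.SeparatingLeft) : symplOrth α ⊤ = ⊥ :=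
  (Submodule.eq_bot_iff _).mpr fun v hv => hα v fun w => hv w trivial

theorem symplOrth_eq_orthogonal (hα : α.IsRefl) (W : Submodule ℂ V) :
    symplOrth α W = LinearMap.BilinForm.orthogonal α W := by
  ext v
  exact ⟨fun h w hw => hα _ _ (h w hw), fun h w hw => hα _ _ (h w hw)⟩

theorem inf_symplOrth_ne_bot_of_odd_finrank [FiniteDimensional ℂ V] (hα : α.IsAlt)
    {U : Submodule ℂ V} (hodd : Odd (finrank ℂ U)) : U ⊓ symplOrth α U ≠ ⊥ := by
  have hαU : (α.domRestrict₁₂ U U).IsAlt := fun u => hα u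
  obtain ⟨z, hz, hz0⟩ : ∃ z : U, (∀ w : U, α z w = 0) ∧ z ≠ 0 := by
    by_contra! h
    exact LinearMap.IsAlt.not_nondegenerate_of_odd_finrank two_ne_zero hαU hodd
      (.ofSeparatingLeft h)
  refine (Submodule.ne_bot_iff _).mpr ⟨z, ⟨z.2, fun w hw => hz ⟨w, hw⟩⟩, ?_⟩
  simpa using hz0

theorem finrank_inf_symplOrth_add_two_le [FiniteDimensional ℂ V] (hα : α.IsAlt)
    {U : Submodule ℂ V} (hU : ¬ IsIsotropic α U) :
    finrank ℂ ↥(U ⊓ symplOrth α U) + 2 ≤ finrank ℂ U := by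
  obtain ⟨u, hu, v, hv, huv⟩ : ∃ u ∈ U, ∃ v ∈ U, α u v ≠ 0 := by
    simpa [IsIsotropic] using hU
  set H := U ⊓ LinearMap.ker (α u)
  have hKH : U ⊓ symplOrth α U < H := by
    refine lt_of_le_of_ne (fun k hk => ⟨hk.1, ?_⟩) fun h => ?_
    · exact (hα.eq_iff).mp (hk.2 u hu)
    · have : u ∈ U ⊓ symplOrth α U := h ▸ ⟨hu, hα.self_eq_zero u⟩
      exact huv (this.2 v hv)
  have hHU : H < U := lt_of_le_of_ne inf_le_left fun h => huv (h ▸ hv : v ∈ H).2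
  have := Submodule.finrank_lt_finrank_of_lt hKH
  have := Submodule.finrank_lt_finrank_of_lt hHU
  omega

variable [FiniteDimensional ℂ V]

theorem finrank_symplOrth (hrefl : α.IsRefl) (hnd : α.Nondegenerate) (W : Submodule ℂ V) :
    finrank ℂ (symplOrth α W) = finrank ℂ V - finrank ℂ W := by
  rw [symplOrth_eq_orthogonal hrefl, LinearMap.BilinForm.finrank_orthogonal hnd]

theorem symplOrth_symplOrth (hrefl : α.IsRefl) (hnd : α.Nondegenerate) (W : Submodule ℂ V) :
    symplOrth α (symplOrth α W) = W := by
  rw [symplOrth_eq_orthogonal hrefl, symplOrth_eq_orthogonal hrefl,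
    LinearMap.BilinForm.orthogonal_orthogonal hnd hrefl]

theorem symplOrth_inf_eq_bot_of_inf_eq_bot (hα : α.SeparatingLeft) {A B : Submodule ℂ V}
    (hAB : finrank ℂ A + finrank ℂ B = finrank ℂ V) (h : A ⊓ B = ⊥) :
    symplOrth α A ⊓ symplOrth α B = ⊥ := by
  have hsup : A ⊔ B = ⊤ := Submodule.eq_top_of_disjoint A B hAB.ge (disjoint_iff.mpr h)
  rw [← symplOrth_sup, hsup, symplOrth_top hα]

theorem inf_eq_bot_iff_symplOrth_inf_eq_bot (hrefl : α.IsRefl) (hnd : α.Nondegenerate)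
    {A B : Submodule ℂ V} (hAB : finrank ℂ A + finrank ℂ B = finrank ℂ V) :
    A ⊓ B = ⊥ ↔ symplOrth α A ⊓ symplOrth α B = ⊥ := by
  refine ⟨symplOrth_inf_eq_bot_of_inf_eq_bot hnd.1 hAB, fun h => ?_⟩
  have hA := Submodule.finrank_le A
  have hB := Submodule.finrank_le B
  have := symplOrth_inf_eq_bot_of_inf_eq_bot hnd.1
    (by rw [finrank_symplOrth hrefl hnd, finrank_symplOrth hrefl hnd]; omega) h
  rwa [symplOrth_symplOrth hrefl hnd, symplOrth_symplOrth hrefl hnd] at this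

theorem isIsotropic_iff_symplOrth_eq (hrefl : α.IsRefl) (hnd : α.Nondegenerate)
    {W : Submodule ℂ V} (hW : finrank ℂ W + finrank ℂ W = finrank ℂ V) :
    IsIsotropic α W ↔ symplOrth α W = W := by
  refine ⟨fun h => (Submodule.eq_of_le_of_finrank_le h ?_).symm, fun h => h.ge⟩
  rw [finrank_symplOrth hrefl hnd]
  omega

theorem isIsotropic_symplOrth_iff (hrefl : α.IsRefl) (hnd : α.Nondegenerate)
    {W : Submodule ℂ V} (hW : finrank ℂ W + finrank ℂ W = finrank ℂ V) :
    IsIsotropic α (symplOrth α W) ↔ IsIsotropic α W := by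
  have hW' : finrank ℂ (symplOrth α W) + finrank ℂ (symplOrth α W) = finrank ℂ V := by
    rw [finrank_symplOrth hrefl hnd]
    omega
  rw [isIsotropic_iff_symplOrth_eq hrefl hnd hW', isIsotropic_iff_symplOrth_eq hrefl hnd hW,
    symplOrth_symplOrth hrefl hnd, eq_comm]

end

/-- For a `3`-dimensional non-Lagrangian subspace `U` of the symplectic `6`-space `(V, α)`:
`U^⊥` is `3`-dimensional and not Lagrangian (i.e. not isotropic); `U ∩ U^⊥` is the radical
`{v ∈ U : α(v,u) = 0 for all u ∈ U}` of `α|_U`, which is `1`-dimensional; and for every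
Lagrangian subspace `L` one has `L ∩ U ≠ 0` iff `L ∩ U^⊥ ≠ 0`. -/
theorem involutive_pair_of_nonlagrangian_threespace
    (V : Type*) [AddCommGroup V] [Module ℂ V] [FiniteDimensional ℂ V]
    (hV : Module.finrank ℂ V = 6)
    (α : V →ₗ[ℂ] V →ₗ[ℂ] ℂ)
    (halt : ∀ v : V, α v v = 0)
    (hnd : ∀ v : V, (∀ w : V, α v w = 0) → v = 0)
    (U : Submodule ℂ V) (hU : Module.finrank ℂ U = 3)
    (hUnl : ¬ IsIsotropic α U) :
    Module.finrank ℂ (symplOrth α U) = 3 ∧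
    ¬ IsIsotropic α (symplOrth α U) ∧
    ((U ⊓ symplOrth α U : Submodule ℂ V) : Set V) =
      {v : V | v ∈ U ∧ ∀ u ∈ U, α v u = 0} ∧
    Module.finrank ℂ ↥(U ⊓ symplOrth α U) = 1 ∧
    (∀ L : Submodule ℂ V, IsLagrangian α L →
      (L ⊓ U ≠ ⊥ ↔ L ⊓ symplOrth α U ≠ ⊥)) := by
  have hα : α.IsAlt := halt
  have hrefl : α.IsRefl := hα.isRefl
  have hnondeg : α.Nondegenerate := LinearMap.BilinForm.Nondegenerate.ofSeparatingLeft hnd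
  have hUhalf : finrank ℂ U + finrank ℂ U = finrank ℂ V := by omega
  refine ⟨?_, (isIsotropic_symplOrth_iff hrefl hnondeg hUhalf).not.mpr hUnl, rfl, ?_, ?_⟩
  · rw [finrank_symplOrth hrefl hnondeg]
    omega
  · have hle := finrank_inf_symplOrth_add_two_le hα hUnl
    have hpos := Submodule.one_le_finrank_iff.mpr
      (inf_symplOrth_ne_bot_of_odd_finrank hα (U := U) (by rw [hU]; decide))
    omega
  · rintro L ⟨hLiso, hL⟩
    have hLL := (isIsotropic_iff_symplOrth_eq hrefl hnondeg (by omega)).mp hLiso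
    rw [Ne, Ne, inf_eq_bot_iff_symplOrth_inf_eq_bot hrefl hnondeg (A := L) (B := U) (by omega),
      hLL]
end

section
/- For linearly independent vectors u, v, w ∈ V, the contraction identity α(u,v)·w + α(v,w)·u + α(w,u)·v = 0 holds if and only if the 3-dimensional subspace span(u, v, w) is Lagrangian. (This expresses that the Lagrangian Grassmannian LG(3,6) is the intersection of the Grassmannian G(3,6) with the linear subspace P(V(14)), where V(14) is the kernel of the contraction map ⋀³V → V determined by α.) -/
open Module

/-- For linearly independent `u, v, w` in the symplectic `6`-space `(V, α)`, the contraction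
`α(u,v)·w + α(v,w)·u + α(w,u)·v` vanishes if and only if `span {u,v,w}` is Lagrangian.
(The Lagrangian Grassmannian is the intersection of `G(3,6)` with the projectivization
of the kernel `V(14)` of the contraction `⋀³V → V` determined by `α`.) -/
theorem contraction_eq_zero_iff_lagrangian
    (V : Type*) [AddCommGroup V] [Module ℂ V] [FiniteDimensional ℂ V]
    (hV : Module.finrank ℂ V = 6)
    (α : V →ₗ[ℂ] V →ₗ[ℂ] ℂ)
    (halt : ∀ v : V, α v v = 0)
    (hnd : ∀ v : V, (∀ w : V, α v w = 0) → v = 0)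
    (u v w : V) (h : LinearIndependent ℂ ![u, v, w]) :
    α u v • w + α v w • u + α w u • v = 0 ↔
      IsLagrangian α (Submodule.span ℂ {u, v, w}) := by
  have hskew : ∀ x y : V, α x y = -α y x := by
    intro x y
    have := halt (x + y)
    simp only [map_add, LinearMap.add_apply, halt x, halt y] at this
    linear_combination this
  have hrange : Set.range ![u, v, w] = {u, v, w} := by
    rw [Matrix.range_cons, Matrix.range_cons, Matrix.range_cons_empty]
    ext x; simp [or_assoc]; tauto
  constructor
  · intro heq
    -- extract coefficient vanishing from linear independence
    have hlin := Fintype.linearIndependent_iff.mp h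
      ![α v w, α w u, α u v] (by
        simp [Fin.sum_univ_three]
        rw [show α v w • u + α w u • v + α u v • w
            = α u v • w + α v w • u + α w u • v by abel]
        exact heq)
    have h1 : α u v = 0 := hlin 2
    have h2 : α v w = 0 := hlin 0
    have h3 : α w u = 0 := hlin 1
    constructor
    · -- isotropic
      have key : ∀ x ∈ ({u, v, w} : Set V), ∀ y ∈ ({u, v, w} : Set V), α x y = 0 := by
        intro x hx y hy
        simp only [Set.mem_insert_iff, Set.mem_singleton_iff] at hx hy
        rcases hx with rfl | rfl | rfl <;> rcases hy with rfl | rfl | rfl <;>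
          first
            | exact halt _
            | assumption
            | (rw [hskew]; simp [h1, h2, h3])
      intro x hx y hy
      induction hx using Submodule.span_induction with
      | mem a ha =>
        induction hy using Submodule.span_induction with
        | mem b hb => exact key a ha b hb
        | zero => simp
        | add b c _ _ hb hc => simp [hb, hc]
        | smul t b _ hb => simp [hb]
      | zero => simp
      | add a b _ _ ha hb => simp [ha, hb]
      | smul t a _ ha => simp [ha]
    · -- dimension 3
      rw [← hrange]
      rw [finrank_span_eq_card h]
      simp
  · rintro ⟨hiso, -⟩
    have hu : u ∈ Submodule.span ℂ ({u, v, w} : Set V) :=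
      Submodule.subset_span (Set.mem_insert _ _)
    have hv : v ∈ Submodule.span ℂ ({u, v, w} : Set V) :=
      Submodule.subset_span (Set.mem_insert_of_mem _ (Set.mem_insert _ _))
    have hw : w ∈ Submodule.span ℂ ({u, v, w} : Set V) :=
      Submodule.subset_span (Set.mem_insert_of_mem _ (Set.mem_insert_of_mem _ rfl))
    rw [hiso u hu v hv, hiso v hv w hw, hiso w hw u hu]
    simp
end

section
/- Set α = γ₁ + ⋯ + γₙ and α' = λ₁γ₁ + ⋯ + λₙγₙ in ⋀²V, where λ₁, …, λₙ ∈ ℂ are pairwise distinct. If δ₁, …, δₙ ∈ ⋀²V are nonzero decomposable 2-vectors such that both α and α' lie in the linear span of δ₁, …, δₙ, then there exist a permutation σ of {1, …, n} and nonzero scalars c₁, …, cₙ ∈ ℂ with δᵢ = cᵢ · γ_{σ(i)} for every i. (Uniqueness of the simultaneous rank-2 decomposition of a general pair of 2-vectors.) -/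
/-!
Write `δᵢ = wᵢ₀ ∧ wᵢ₁`, `α = ∑ aᵢ δᵢ` and `α' = ∑ a'ᵢ δᵢ`. Two-vectors commute and square to
zero, so if the `cᵢ` vanish outside a `k`-element set `s` then
`(∑ cᵢ γᵢ)ᵏ = k! (∏_{i ∈ s} cᵢ) ∏_{i ∈ s} γᵢ` and `(∑ cᵢ γᵢ)ᵏ⁺¹ = 0`. Comparing `n`-th powers of
`α` gives `∏ aᵢ ≠ 0` and `∏ δᵢ ≠ 0`. For each `j` the `n`-th power of
`α' - λⱼ α = ∑ (λᵢ - λⱼ) γᵢ` vanishes, which forces `a'ᵢ = λⱼ aᵢ` for some `i = τ j`;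
distinctness of the `λ`s makes `τ` a permutation. Comparing `(n-1)`-th powers of the same
element, `∏_{l ≠ j} γₗ` is a nonzero multiple of `∏_{i ≠ τ j} δᵢ`, hence is annihilated by every
`wᵢₜ` with `i ≠ τ j`; contracting with the dual basis shows that such `wᵢₜ` have no `uⱼ, vⱼ`
component. So `wᵢ₀, wᵢ₁ ∈ span(u_{τ⁻¹ i}, v_{τ⁻¹ i})` and `δᵢ` is a multiple of `γ_{τ⁻¹ i}`.
-/

open Module Finset

section SquareZero

variable {A : Type*} [Semiring A]

theorem Commute.add_pow_succ_of_mul_self_eq_zero {x y : A} (h : Commute x y) (hx : x * x = 0)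
    (m : ℕ) : (x + y) ^ (m + 1) = y ^ (m + 1) + (m + 1) • (x * y ^ m) := by
  rw [h.add_pow, sum_range_succ', sum_range_succ', sum_eq_zero fun k _ => by
    rw [pow_succ, pow_succ, mul_assoc (x ^ k), hx, mul_zero, zero_mul, zero_mul]]
  simp only [pow_zero, pow_one, one_mul, mul_one, zero_add, Nat.sub_zero, Nat.add_sub_cancel,
    Nat.choose_zero_right, Nat.choose_one_right, Nat.cast_one, nsmul_eq_mul, Nat.cast_comm,
    add_comm]

variable {ι : Type*} [DecidableEq ι] {f : ι → A}

theorem Finset.sum_pow_eq_zero_of_card_lt (hc : ∀ i j, Commute (f i) (f j))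
    (hf : ∀ i, f i * f i = 0) (s : Finset ι) {k : ℕ} (hk : #s < k) : (∑ i ∈ s, f i) ^ k = 0 := by
  induction s using Finset.induction_on generalizing k with
  | empty => rw [sum_empty, zero_pow (by omega)]
  | insert a s ha ih =>
    rw [card_insert_of_notMem ha] at hk
    obtain ⟨m, rfl⟩ : ∃ m, k = m + 1 := ⟨k - 1, by omega⟩
    rw [sum_insert ha, (Commute.sum_right _ _ _ fun i _ => hc a i).add_pow_succ_of_mul_self_eq_zero
      (hf a), ih (by omega), ih (by omega), mul_zero, smul_zero, add_zero]

theorem Finset.sum_pow_card_eq_factorial_smul_noncommProd (hc : ∀ i j, Commute (f i) (f j))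
    (hf : ∀ i, f i * f i = 0) (s : Finset ι) :
    (∑ i ∈ s, f i) ^ #s =
      (#s).factorial • s.noncommProd f (Pairwise.set_pairwise (fun i j _ => hc i j) _) := by
  induction s using Finset.induction_on with
  | empty => simp
  | insert a s ha ih =>
    rw [sum_insert ha, card_insert_of_notMem ha, noncommProd_insert_of_notMem _ _ _ _ ha,
      (Commute.sum_right _ _ _ fun i _ => hc a i).add_pow_succ_of_mul_self_eq_zero (hf a),
      sum_pow_eq_zero_of_card_lt hc hf s (Nat.lt_succ_self _), zero_add, ih,
      Nat.factorial_succ, mul_smul_comm, smul_smul]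

end SquareZero

theorem Finset.noncommProd_smul {R A ι : Type*} [CommMonoid R] [Monoid A] [MulAction R A]
    [IsScalarTower R A A] [SMulCommClass R A A] [DecidableEq ι] (s : Finset ι) (c : ι → R)
    (f : ι → A) (hf : ∀ i j, Commute (f i) (f j)) :
    s.noncommProd (fun i => c i • f i)
        (Pairwise.set_pairwise (fun i j _ => ((hf i j).smul_left _).smul_right _) _) =
      (∏ i ∈ s, c i) • s.noncommProd f (Pairwise.set_pairwise (fun i j _ => hf i j) _) := by
  induction s using Finset.induction_on with
  | empty => simp
  | insert a s ha ih =>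
    rw [noncommProd_insert_of_notMem _ _ _ _ ha, noncommProd_insert_of_notMem _ _ _ _ ha,
      prod_insert ha, ih, smul_mul_smul_comm]

theorem Module.Basis.eq_smul_add_smul_of_repr_eq_zero {R M κ : Type*} [Semiring R]
    [AddCommMonoid M] [Module R M] [Fintype κ] (b : Basis (κ × Fin 2) R M) {x : M} {k : κ}
    (h : ∀ m : κ × Fin 2, m.1 ≠ k → b.repr x m = 0) :
    x = b.repr x (k, 0) • b (k, 0) + b.repr x (k, 1) • b (k, 1) := by
  conv_lhs => rw [← b.sum_repr x]
  rw [Fintype.sum_prod_type, Fintype.sum_eq_single k fun j hj => sum_eq_zero fun t _ => by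
    rw [h (j, t) hj, zero_smul], Fin.sum_univ_two]

namespace ExteriorAlgebra

variable (R : Type*) {M : Type*} [CommRing R] [AddCommGroup M] [Module R M]

theorem ι_mul_ι_eq_neg (x y : M) : ι R x * ι R y = -(ι R y * ι R x) :=
  eq_neg_of_add_eq_zero_left (ι_add_mul_swap x y)

theorem commute_ι_mul_ι (x y v : M) : Commute (ι R x * ι R y) (ι R v) := by
  show _ * _ = _ * _
  rw [mul_assoc, ι_mul_ι_eq_neg R y, mul_neg, ← mul_assoc, ι_mul_ι_eq_neg R x, neg_mul, neg_neg,
    mul_assoc]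

theorem ι_mul_ι_eq_det_smul (x y : M) (p q r s : R) :
    ι R (p • x + q • y) * ι R (r • x + s • y) = (p * s - q * r) • (ι R x * ι R y) := by
  simp only [map_add, map_smul, add_mul, mul_add, smul_mul_smul_comm, ι_sq_zero, smul_zero,
    zero_add, add_zero, ι_mul_ι_eq_neg R y x, smul_neg, sub_smul, mul_comm q r]
  abel

variable {κ : Type*}

noncomputable def bivector (w : κ × Fin 2 → M) (i : κ) : ExteriorAlgebra R M :=
  ι R (w (i, 0)) * ι R (w (i, 1))

variable {R}

theorem commute_bivector (w : κ × Fin 2 → M) (i j : κ) :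
    Commute (bivector R w i) (bivector R w j) :=
  (commute_ι_mul_ι R _ _ _).mul_right (commute_ι_mul_ι R _ _ _)

theorem ι_mul_bivector_self (w : κ × Fin 2 → M) (i : κ) (t : Fin 2) :
    ι R (w (i, t)) * bivector R w i = 0 := by
  obtain rfl | rfl : t = 0 ∨ t = 1 := by omega
  · rw [bivector, ← mul_assoc, ι_sq_zero, zero_mul]
  · rw [bivector, ← (commute_ι_mul_ι R _ _ _).eq, mul_assoc, ι_sq_zero, mul_zero]

theorem bivector_mul_self (w : κ × Fin 2 → M) (i : κ) : bivector R w i * bivector R w i = 0 := by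
  nth_rw 1 [bivector]
  rw [mul_assoc, ι_mul_bivector_self w i 1, mul_zero]

theorem commute_smul_bivector (w : κ × Fin 2 → M) (c : κ → R) (i j : κ) :
    Commute (c i • bivector R w i) (c j • bivector R w j) :=
  ((commute_bivector w i j).smul_left _).smul_right _

theorem smul_bivector_mul_self (w : κ × Fin 2 → M) (c : κ → R) (i : κ) :
    c i • bivector R w i * (c i • bivector R w i) = 0 := by
  rw [smul_mul_smul_comm, bivector_mul_self, smul_zero]

theorem sum_smul_bivector_eq_sum_of_support_subset [Fintype κ] (w : κ × Fin 2 → M) {c : κ → R}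
    {s : Finset κ} (hs : ∀ i ∉ s, c i = 0) :
    ∑ i, c i • bivector R w i = ∑ i ∈ s, c i • bivector R w i :=
  (sum_subset (subset_univ s) fun i _ hi => by rw [hs i hi, zero_smul]).symm

variable (R) [DecidableEq κ]

noncomputable def bivectorProd (w : κ × Fin 2 → M) (s : Finset κ) : ExteriorAlgebra R M :=
  s.noncommProd (bivector R w) (Pairwise.set_pairwise (fun i j _ => commute_bivector w i j) _)

variable {R}

theorem bivectorProd_insert (w : κ × Fin 2 → M) {s : Finset κ} {a : κ} (ha : a ∉ s) :
    bivectorProd R w (insert a s) = bivector R w a * bivectorProd R w s :=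
  noncommProd_insert_of_notMem _ _ _ _ ha

theorem ι_mul_bivectorProd_of_mem (w : κ × Fin 2 → M) {s : Finset κ} {i : κ} (hi : i ∈ s)
    (t : Fin 2) : ι R (w (i, t)) * bivectorProd R w s = 0 := by
  rw [bivectorProd, ← mul_noncommProd_erase _ hi, ← mul_assoc, ι_mul_bivector_self, zero_mul]

theorem contractLeft_bivectorProd (d : Dual R M) (w : κ × Fin 2 → M) {s : Finset κ}
    (hd : ∀ i ∈ s, ∀ t, d (w (i, t)) = 0) :
    CliffordAlgebra.contractLeft d (bivectorProd R w s) = 0 := by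
  induction s using Finset.induction_on with
  | empty => simp [bivectorProd]
  | insert a s ha ih =>
    rw [bivectorProd_insert w ha, bivector, mul_assoc, CliffordAlgebra.contractLeft_ι_mul,
      CliffordAlgebra.contractLeft_ι_mul, ih fun i hi => hd i (mem_insert_of_mem hi),
      hd a (mem_insert_self a s) 0, hd a (mem_insert_self a s) 1]
    simp

theorem contractLeft_coord_contractLeft_coord_bivectorProd_insert (b : Basis (κ × Fin 2) R M)
    {s : Finset κ} {a : κ} (ha : a ∉ s) :
    CliffordAlgebra.contractLeft (b.coord (a, 1))
        (CliffordAlgebra.contractLeft (b.coord (a, 0)) (bivectorProd R b (insert a s))) =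
      bivectorProd R b s := by
  have hs : ∀ t, CliffordAlgebra.contractLeft (b.coord (a, t)) (bivectorProd R b s) = 0 :=
    fun t => contractLeft_bivectorProd _ _ fun i hi t' => by
      rw [Basis.coord_apply, Basis.repr_self, Finsupp.single_eq_of_ne]
      rintro ⟨⟩; exact ha hi
  rw [bivectorProd_insert _ ha, bivector, mul_assoc]
  simp [CliffordAlgebra.contractLeft_ι_mul, Basis.coord_apply, hs]

theorem bivectorProd_ne_zero [Nontrivial R] (b : Basis (κ × Fin 2) R M) (s : Finset κ) :
    bivectorProd R b s ≠ 0 := by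
  induction s using Finset.induction_on with
  | empty => simp [bivectorProd]
  | insert a s ha ih =>
    intro h
    apply ih
    rw [← contractLeft_coord_contractLeft_coord_bivectorProd_insert b ha, h, map_zero, map_zero]

theorem repr_eq_zero_of_ι_mul_bivectorProd_eq_zero {K : Type*} [Field K] [Module K M]
    (b : Basis (κ × Fin 2) K M) {s : Finset κ} {v : M} (h : ι K v * bivectorProd K b s = 0)
    {m : κ × Fin 2} (hm : m.1 ∉ s) : b.repr v m = 0 := by
  have hs : CliffordAlgebra.contractLeft (b.coord m) (bivectorProd K b s) = 0 :=
    contractLeft_bivectorProd _ _ fun i hi t => by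
      rw [Basis.coord_apply, Basis.repr_self, Finsupp.single_eq_of_ne]
      rintro rfl; exact hm hi
  have := congrArg (CliffordAlgebra.contractLeft (b.coord m)) h
  rw [CliffordAlgebra.contractLeft_ι_mul, hs, mul_zero, sub_zero, map_zero] at this
  exact (smul_eq_zero.mp this).resolve_right (bivectorProd_ne_zero b s)

section PowerOfSum

variable [Fintype κ] (w : κ × Fin 2 → M) {c : κ → R} {s : Finset κ}

theorem sum_smul_bivector_pow_eq_zero (hs : ∀ i ∉ s, c i = 0) {k : ℕ} (hk : #s < k) :
    (∑ i, c i • bivector R w i) ^ k = 0 := by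
  rw [sum_smul_bivector_eq_sum_of_support_subset w hs]
  exact sum_pow_eq_zero_of_card_lt (commute_smul_bivector w c) (smul_bivector_mul_self w c) s hk

theorem sum_smul_bivector_pow_card (hs : ∀ i ∉ s, c i = 0) :
    (∑ i, c i • bivector R w i) ^ #s = (#s).factorial • (∏ i ∈ s, c i) • bivectorProd R w s := by
  rw [sum_smul_bivector_eq_sum_of_support_subset w hs,
    sum_pow_card_eq_factorial_smul_noncommProd (commute_smul_bivector w c)
      (smul_bivector_mul_self w c), noncommProd_smul _ c _ (commute_bivector w)]
  rfl

end PowerOfSum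

section SimultaneousDecomposition

variable {K V κ : Type*} [Field K] [AddCommGroup V] [Module K V] [Fintype κ]

theorem exists_bivector_eq_smul (b : Basis (κ × Fin 2) K V) {w : κ × Fin 2 → V} {i k : κ}
    (h : ∀ t, ∀ m : κ × Fin 2, m.1 ≠ k → b.repr (w (i, t)) m = 0) :
    ∃ c : K, bivector K w i = c • bivector K b k := by
  rw [bivector, b.eq_smul_add_smul_of_repr_eq_zero (h 0), b.eq_smul_add_smul_of_repr_eq_zero (h 1),
    ι_mul_ι_eq_det_smul]
  exact ⟨_, rfl⟩

theorem sum_sub_mul_smul_bivector_eq (b : Basis (κ × Fin 2) K V) {w : κ × Fin 2 → V}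
    {lam a a' : κ → K} (ha : ∑ i, a i • bivector K w i = ∑ i, bivector K b i)
    (ha' : ∑ i, a' i • bivector K w i = ∑ i, lam i • bivector K b i) (t : K) :
    ∑ i, (a' i - t * a i) • bivector K w i = ∑ i, (lam i - t) • bivector K b i := by
  simp only [sub_smul, mul_smul, sum_sub_distrib, ← smul_sum, ha, ha']

variable [CharZero K] [DecidableEq κ]

theorem prod_smul_bivectorProd_eq_of_sum_eq {w w' : κ × Fin 2 → V} {c c' : κ → K}
    {s s' : Finset κ} (hs : ∀ i ∉ s, c i = 0) (hs' : ∀ i ∉ s', c' i = 0) (hcard : #s = #s')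
    (h : ∑ i, c i • bivector K w i = ∑ i, c' i • bivector K w' i) :
    (∏ i ∈ s, c i) • bivectorProd K w s = (∏ i ∈ s', c' i) • bivectorProd K w' s' := by
  have hpow := congrArg (· ^ #s) h
  rw [sum_smul_bivector_pow_card w hs, hcard, sum_smul_bivector_pow_card w' hs',
    ← Nat.cast_smul_eq_nsmul K, ← Nat.cast_smul_eq_nsmul K] at hpow
  exact smul_right_injective _ (Nat.cast_ne_zero.mpr (Nat.factorial_ne_zero _)) hpow

variable (b : Basis (κ × Fin 2) K V) {w : κ × Fin 2 → V} {lam a a' : κ → K}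

theorem prod_ne_zero_of_sum_smul_bivector_eq
    (ha : ∑ i, a i • bivector K w i = ∑ i, bivector K b i) :
    ∏ i, a i ≠ 0 ∧ bivectorProd K w univ ≠ 0 := by
  have h := prod_smul_bivectorProd_eq_of_sum_eq (w' := b) (s := univ) (s' := univ)
    (c' := fun _ => 1) (by simp) (by simp) rfl (ha.trans (by simp))
  rw [prod_const_one, one_smul] at h
  exact smul_ne_zero_iff.mp (h ▸ bivectorProd_ne_zero b univ)

theorem exists_coeff_eq_mul (ha : ∑ i, a i • bivector K w i = ∑ i, bivector K b i)
    (ha' : ∑ i, a' i • bivector K w i = ∑ i, lam i • bivector K b i) (j : κ) :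
    ∃ i, a' i = lam j * a i := by
  have hpow : (∑ i, (lam i - lam j) • bivector K b i) ^ #(univ : Finset κ) = 0 :=
    sum_smul_bivector_pow_eq_zero b (s := univ.erase j) (fun i hi => by simp_all)
      (card_erase_lt_of_mem (mem_univ j))
  rw [← sum_sub_mul_smul_bivector_eq b ha ha', sum_smul_bivector_pow_card w (by simp),
    ← Nat.cast_smul_eq_nsmul K, smul_eq_zero, smul_eq_zero] at hpow
  obtain hfact | hprod | hw := hpow
  · exact absurd hfact (Nat.cast_ne_zero.mpr (Nat.factorial_ne_zero _))
  · obtain ⟨i, -, hi⟩ := prod_eq_zero_iff.mp hprod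
    exact ⟨i, sub_eq_zero.mp hi⟩
  · exact absurd hw (prod_ne_zero_of_sum_smul_bivector_eq b ha).2

theorem repr_eq_zero_of_coeff_eq_mul (hlam : Function.Injective lam)
    (ha : ∑ i, a i • bivector K w i = ∑ i, bivector K b i)
    (ha' : ∑ i, a' i • bivector K w i = ∑ i, lam i • bivector K b i) {i k : κ}
    {m : κ × Fin 2} (hk : a' k = lam m.1 * a k) (hik : i ≠ k) (t : Fin 2) :
    b.repr (w (i, t)) m = 0 := by
  have h := prod_smul_bivectorProd_eq_of_sum_eq (s := univ.erase m.1) (s' := univ.erase k)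
    (by simp) (by simp [hk]) (by simp [card_erase_of_mem])
    (sum_sub_mul_smul_bivector_eq b ha ha' (lam m.1)).symm
  have hprod : ∏ l ∈ univ.erase m.1, (lam l - lam m.1) ≠ 0 :=
    prod_ne_zero_iff.mpr fun l hl => sub_ne_zero.mpr (hlam.ne (ne_of_mem_erase hl))
  refine repr_eq_zero_of_ι_mul_bivectorProd_eq_zero b ?_ (notMem_erase m.1 univ)
  have hmul := congrArg (ι K (w (i, t)) * ·) h
  simp only [mul_smul_comm, ι_mul_bivectorProd_of_mem w (mem_erase.mpr ⟨hik, mem_univ i⟩),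
    smul_zero] at hmul
  exact (smul_eq_zero.mp hmul).resolve_left hprod

end SimultaneousDecomposition

end ExteriorAlgebra

open ExteriorAlgebra

theorem unique_simultaneous_decomposition_general
    (n : ℕ)
    (V : Type*) [AddCommGroup V] [Module ℂ V]
    (b : Basis (Fin n × Fin 2) ℂ V)
    (lam : Fin n → ℂ) (hlam : Function.Injective lam)
    (δ : Fin n → ExteriorAlgebra ℂ V)
    (hδ0 : ∀ i, δ i ≠ 0)
    (hdec : ∀ i, ∃ x y : V, δ i = ExteriorAlgebra.ι ℂ x * ExteriorAlgebra.ι ℂ y)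
    (hα : (∑ i, ExteriorAlgebra.ι ℂ (b (i, 0)) * ExteriorAlgebra.ι ℂ (b (i, 1))) ∈
        Submodule.span ℂ (Set.range δ))
    (hα' : (∑ i, lam i • (ExteriorAlgebra.ι ℂ (b (i, 0)) * ExteriorAlgebra.ι ℂ (b (i, 1)))) ∈
        Submodule.span ℂ (Set.range δ)) :
    ∃ (σ : Equiv.Perm (Fin n)) (c : Fin n → ℂ), (∀ i, c i ≠ 0) ∧
      ∀ i, δ i = c i • (ExteriorAlgebra.ι ℂ (b (σ i, 0)) * ExteriorAlgebra.ι ℂ (b (σ i, 1))) := by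
  choose x y hxy using hdec
  obtain ⟨w, rfl⟩ : ∃ w : Fin n × Fin 2 → V, δ = bivector ℂ w :=
    ⟨fun m => ![x m.1, y m.1] m.2, funext hxy⟩
  obtain ⟨a, ha⟩ := (Submodule.mem_span_range_iff_exists_fun ℂ).mp hα
  obtain ⟨a', ha'⟩ := (Submodule.mem_span_range_iff_exists_fun ℂ).mp hα'
  have ha0 : ∀ i, a i ≠ 0 := fun i =>
    prod_ne_zero_iff.mp (prod_ne_zero_of_sum_smul_bivector_eq b ha).1 i (mem_univ i)
  choose τ hτ using exists_coeff_eq_mul b ha ha'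
  have hτ_inj : Function.Injective τ := fun j j' hjj' =>
    hlam (mul_right_cancel₀ (ha0 (τ j')) (by rw [← hτ j', ← hjj', hτ j]))
  let σ := (Equiv.ofBijective τ (Finite.injective_iff_bijective.mp hτ_inj)).symm
  have hσ : ∀ i, ∃ c, bivector ℂ w i = c • bivector ℂ b (σ i) := fun i =>
    exists_bivector_eq_smul b fun t m hm =>
      repr_eq_zero_of_coeff_eq_mul b hlam ha ha' (i := i) (hτ m.1)
        (fun hi => hm (by simp [σ, hi])) t
  choose c hc using hσ
  exact ⟨σ, c, fun i h => hδ0 i (by rw [hc i, h, zero_smul]), hc⟩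

/-- Uniqueness of the simultaneous rank-2 decomposition of a general pair of 2-vectors:
with `γᵢ = uᵢ ∧ vᵢ` for a basis `u₁, v₁, …, uₙ, vₙ` of `V = ℂ^{2n}`, set `α = γ₁ + ⋯ + γₙ` and
`α' = λ₁γ₁ + ⋯ + λₙγₙ` with pairwise distinct `λᵢ`.  If `δ₁, …, δₙ` are nonzero decomposable
2-vectors whose linear span contains `α` and `α'`, then the `δᵢ` are, up to a permutation
and nonzero scalars, exactly the `γᵢ`. -/
theorem unique_simultaneous_decomposition
    (n : ℕ) (hn : 1 ≤ n)
    (V : Type*) [AddCommGroup V] [Module ℂ V]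
    (b : Basis (Fin n × Fin 2) ℂ V)
    (lam : Fin n → ℂ) (hlam : Function.Injective lam)
    (δ : Fin n → ExteriorAlgebra ℂ V)
    (hδ0 : ∀ i, δ i ≠ 0)
    (hdec : ∀ i, ∃ x y : V, δ i = ExteriorAlgebra.ι ℂ x * ExteriorAlgebra.ι ℂ y)
    (hα : (∑ i, ExteriorAlgebra.ι ℂ (b (i, 0)) * ExteriorAlgebra.ι ℂ (b (i, 1))) ∈
        Submodule.span ℂ (Set.range δ))
    (hα' : (∑ i, lam i • (ExteriorAlgebra.ι ℂ (b (i, 0)) * ExteriorAlgebra.ι ℂ (b (i, 1)))) ∈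
        Submodule.span ℂ (Set.range δ)) :
    ∃ (σ : Equiv.Perm (Fin n)) (c : Fin n → ℂ), (∀ i, c i ≠ 0) ∧
      ∀ i, δ i = c i • (ExteriorAlgebra.ι ℂ (b (σ i, 0)) * ExteriorAlgebra.ι ℂ (b (σ i, 1))) :=
  unique_simultaneous_decomposition_general n V b lam hlam δ hδ0 hdec hα hα'
end
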